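/- Before-flag characterization of the decider: fix an assignment under which exactly l of B_j,...,B_{N−1} are true, suppose l + c = k and j ≤ i. Then the value of DecExt^j_{c,0} equals (if B_i is false then A else C); i.e., DecExt^j_{c,0} correctly behaves as the decision (A ⟨B_i⟩ C). -/

import Mathlib

/-- The decider nodes `DecExt^j_{c,b}` built from the Boolean values `B_0, …, B_{N-1}`,
with distinguished index `i`, target count `k`, and output values `A` (flag 0) and `C`
(flag 1):
`DecExt^j_{c,b} = DecExt^{j+1}_{c,b} ∨ (B_j ∧ DecExt^{j+1}_{c+1,b})` for `j < N`, `j ≠ i`;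
`DecExt^i_{c,0} = DecExt^{i+1}_{c,0} ∨ (B_i ∧ DecExt^{i+1}_{c+1,1})`;
`DecExt^N_{k,0} = A`, `DecExt^N_{k,1} = C`, `DecExt^N_{c,b} = 0` for `c ≠ k`. -/
def decExt (N i : ℕ) (k : ℤ) (A C : Bool) (B : ℕ → Bool) (j : ℕ) (c : ℤ) (b : Bool) : Bool :=
  if _h : j < N then
    if j = i ∧ b = false then
      decExt N i k A C B (j + 1) c false || (B i && decExt N i k A C B (j + 1) (c + 1) true)
    else
      decExt N i k A C B (j + 1) c b || (B j && decExt N i k A C B (j + 1) (c + 1) b)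
  else if c = k then (if b then C else A) else false
termination_by N - j
decreasing_by all_goals omega

/-- The number of true values among `B_j, …, B_{N-1}`. -/
def cnt (N : ℕ) (B : ℕ → Bool) (j : ℕ) : ℕ :=
  ((Finset.Ico j N).filter fun m => B m = true).card

/-!
Along a branch of the decider every true `B_m` either leaves the counter `c` alone or
increments it, and the branch reaches a nonzero leaf only if the counter ends exactly at `k`.
Hence a node whose counter is already `k - cnt` can only survive by incrementing at every
true `B_m`, so it follows a single path and its value is `A` or `C` according to the flag at
the end; the flag is set on this path exactly when it is already set, or when `i` is still
ahead and `B_i` is true.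
-/

section

variable {N i : ℕ} {k : ℤ} {A C : Bool} {B : ℕ → Bool}

theorem cnt_of_le {j : ℕ} (h : N ≤ j) : cnt N B j = 0 := by
  simp [cnt, Finset.Ico_eq_empty_of_le h]

theorem cnt_of_lt {j : ℕ} (h : j < N) : cnt N B j = cnt N B (j + 1) + (B j).toNat := by
  rw [cnt, ← Finset.insert_Ico_add_one_left_eq_Ico h, Finset.filter_insert]
  cases B j <;> simp [cnt, Finset.card_insert_of_notMem]

theorem decExt_of_le {j : ℕ} {c : ℤ} {b : Bool} (h : N ≤ j) :
    decExt N i k A C B j c b = if c = k then (if b then C else A) else false := by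
  rw [decExt, dif_neg (by omega)]

theorem decExt_of_lt {j : ℕ} {c : ℤ} {b : Bool} (h : j < N) :
    decExt N i k A C B j c b =
      (decExt N i k A C B (j + 1) c b ||
        (B j && decExt N i k A C B (j + 1) (c + 1) (b || decide (j = i)))) := by
  rw [decExt, dif_pos h]
  by_cases hj : j = i <;> cases b <;> simp [hj]

theorem decExt_eq_false_of_lt {j : ℕ} {c : ℤ} {b : Bool} (h : c + cnt N B j < k) :
    decExt N i k A C B j c b = false := by
  by_cases hj : j < N
  · have hcnt := cnt_of_lt (B := B) hj
    rw [decExt_of_lt hj, decExt_eq_false_of_lt (j := j + 1) (c := c) (by omega)]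
    cases hB : B j
    · rfl
    · simp only [hB, Bool.toNat_true] at hcnt
      rw [decExt_eq_false_of_lt (j := j + 1) (c := c + 1) (by omega)]
      rfl
  · rw [cnt_of_le (by omega), Nat.cast_zero, add_zero] at h
    simp [decExt_of_le (not_lt.mp hj), h.ne]
termination_by N - j

theorem decExt_of_add_cnt_eq {j : ℕ} {c : ℤ} {b : Bool} (hi : i < N)
    (h : c + cnt N B j = k) :
    decExt N i k A C B j c b = if b || (decide (j ≤ i) && B i) then C else A := by
  by_cases hj : j < N
  · have hcnt := cnt_of_lt (B := B) hj
    rw [decExt_of_lt hj]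
    cases hB : B j
    · simp only [hB, Bool.toNat_false, add_zero] at hcnt
      rw [decExt_of_add_cnt_eq (j := j + 1) (c := c) hi (by omega)]
      rcases lt_trichotomy j i with hji | rfl | hij
      · simp [hji.le, show j + 1 ≤ i by omega]
      · simp [hB]
      · simp [show ¬ j ≤ i by omega, show ¬ j + 1 ≤ i by omega]
    · simp only [hB, Bool.toNat_true] at hcnt
      rw [decExt_eq_false_of_lt (j := j + 1) (c := c) (by omega),
        decExt_of_add_cnt_eq (j := j + 1) (c := c + 1) hi (by omega)]
      rcases lt_trichotomy j i with hji | rfl | hij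
      · simp [hji.le, show j + 1 ≤ i by omega, hji.ne]
      · simp [hB]
      · simp [show ¬ j ≤ i by omega, show ¬ j + 1 ≤ i by omega, hij.ne']
  · rw [decExt_of_le (by omega), if_pos (by rw [cnt_of_le (by omega)] at h; omega)]
    simp [show ¬ j ≤ i by omega]
termination_by N - j

end

/-- Before-flag characterization of the decider: if exactly `l` of `B_j, …, B_{N-1}` are
true, `l + c = k` and `j ≤ i`, then `DecExt^j_{c,0}` evaluates to the decision
`(A ⟨B_i⟩ C)`, i.e. to `A` if `B_i` is false and to `C` if `B_i` is true. -/
theorem decider_before_flag (N i : ℕ) (hi : i < N) (k : ℤ) (A C : Bool) (B : ℕ → Bool)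
    (j : ℕ) (hji : j ≤ i) (l c : ℤ)
    (hl : (cnt N B j : ℤ) = l) (hlc : l + c = k) :
    decExt N i k A C B j c false = if B i then C else A := by
  simpa [hji] using decExt_of_add_cnt_eq (b := false) hi (by omega : c + cnt N B j = k)
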